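/- arXiv:2009.07893 — 4 statements merged into one kernel-verified Lean document; each statement's English description precedes it below -/
import Mathlib

section
/- For every even integer n ≥ 6, (n/8)·sin(2π/n) < ((n−1)/2)·(sin(π/(n−1)) − tan(π/(2(n−1)))), i.e., the area of the regular small n-gon is strictly less than the area of the regular small (n−1)-gon. -/
/-!
With `s = 2π/n` and `b = π/(2(n-1))`, the identity `sin 2b - tan b = tan b · cos 2b` turns the
two areas into `π/4 · sin s / s` and `π/4 · tan b · cos 2b / b`. Taylor bounds of degree at most
five for `sin` and `cos` reduce their comparison to a polynomial inequality in `b²`, which holds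
because `10b ≤ 3s ≤ 12b` and `b ≤ π/10`.
-/

open Real

namespace Real

variable {x : ℝ}

theorem cos_le_one_sub_sq_div_two_add_pow_four (x : ℝ) :
    cos x ≤ 1 - x ^ 2 / 2 + x ^ 4 / 24 := by
  wlog hx : 0 ≤ x generalizing x
  · simpa [Even.neg_pow (by decide : Even 4)] using this (-x) (by linarith)
  let f (t : ℝ) : ℝ := 1 - t ^ 2 / 2 + t ^ 4 / 24 - cos t
  have hderiv (t : ℝ) : deriv f t = sin t - (t - t ^ 3 / 6) := by
    simp (disch := fun_prop) [f]
    ring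
  have hmono : MonotoneOn f (Set.Ici 0) := by
    apply monotoneOn_of_deriv_nonneg (convex_Ici 0) (by fun_prop) (by fun_prop)
    grind [sin_ge_sub_cube, interior_Ici]
  have h0 : f 0 ≤ f x := hmono (by simp) hx hx
  grind [cos_zero]

theorem sin_le_sub_cube_add_pow_five (hx : 0 ≤ x) :
    sin x ≤ x - x ^ 3 / 6 + x ^ 5 / 120 := by
  let f (t : ℝ) : ℝ := t - t ^ 3 / 6 + t ^ 5 / 120 - sin t
  have hderiv (t : ℝ) : deriv f t = 1 - t ^ 2 / 2 + t ^ 4 / 24 - cos t := by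
    simp (disch := fun_prop) [f]
    ring
  have hmono : MonotoneOn f (Set.Ici 0) := by
    apply monotoneOn_of_deriv_nonneg (convex_Ici 0) (by fun_prop) (by fun_prop)
    grind [cos_le_one_sub_sq_div_two_add_pow_four]
  have h0 : f 0 ≤ f x := hmono (by simp) hx hx
  grind [sin_zero]

theorem sin_two_mul_sub_tan (x : ℝ) : sin (2 * x) - tan x = tan x * cos (2 * x) := by
  rw [tan_eq_sin_div_cos, sin_two_mul, cos_two_mul]
  rcases eq_or_ne (cos x) 0 with h | h
  · simp [h]
  · field_simp

theorem sub_cube_le_tan_mul (hx₀ : 0 ≤ x) (hx : x < π / 2) :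
    x - x ^ 3 / 6 ≤ tan x * (1 - x ^ 2 / 2 + x ^ 4 / 24) := by
  have hcos : 0 < cos x := cos_pos_of_mem_Ioo ⟨by linarith [pi_pos], hx⟩
  calc x - x ^ 3 / 6 ≤ sin x := sin_ge_sub_cube hx₀
    _ = tan x * cos x := by rw [tan_eq_sin_div_cos, div_mul_cancel₀ _ hcos.ne']
    _ ≤ _ := mul_le_mul_of_nonneg_left (cos_le_one_sub_sq_div_two_add_pow_four x)
        (tan_nonneg_of_nonneg_of_le_pi_div_two hx₀ hx.le)

end Real

theorem sin_div_lt_tan_mul_cos_two_mul_div {b s : ℝ} (hb : 0 < b) (hb2 : b ^ 2 ≤ 1 / 10)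
    (hbs : 10 * b ≤ 3 * s) (hsb : s ≤ 4 * b) :
    sin s / s < tan b * cos (2 * b) / b := by
  have hs : 0 < s := by linarith
  set c := 1 - b ^ 2 / 2 + b ^ 4 / 24 with hc_def
  have hc : 0 < c := by nlinarith [pow_nonneg hb.le 4]
  have hsin : sin s / s ≤ 1 - s ^ 2 / 6 + s ^ 4 / 120 := by
    rw [div_le_iff₀ hs]
    linarith [sin_le_sub_cube_add_pow_five hs.le]
  -- `t ↦ 1 - t / 6 + t ^ 2 / 120` decreases on `[0, 10]`, and `s ^ 2 ≥ 100 b ^ 2 / 9`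
  have hquad : 1 - s ^ 2 / 6 + s ^ 4 / 120 ≤ 1 - 50 / 27 * b ^ 2 + 250 / 243 * b ^ 4 := by
    nlinarith [mul_nonneg (by nlinarith : 0 ≤ 9 * s ^ 2 - 100 * b ^ 2)
      (by nlinarith : 0 ≤ 20 - s ^ 2 - 100 / 9 * b ^ 2)]
  have hpoly :
      (1 - 50 / 27 * b ^ 2 + 250 / 243 * b ^ 4) * c < (1 - b ^ 2 / 6) * (1 - 2 * b ^ 2) := by
    have hu : 0 < b ^ 2 := by positivity
    rw [hc_def]
    nlinarith [mul_pos hu hu, mul_pos (mul_pos hu hu) hu, mul_nonneg hu.le (sub_nonneg.2 hb2)]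
  have htan : (b - b ^ 3 / 6) * (1 - 2 * b ^ 2) ≤ tan b * cos (2 * b) * c := by
    have hcos2 : 1 - 2 * b ^ 2 ≤ cos (2 * b) := by
      nlinarith [one_sub_sq_div_two_le_cos (x := 2 * b)]
    have hb' : b < π / 2 := by nlinarith [pi_gt_three]
    calc (b - b ^ 3 / 6) * (1 - 2 * b ^ 2) ≤ tan b * c * cos (2 * b) :=
          mul_le_mul (sub_cube_le_tan_mul hb.le hb') hcos2 (by nlinarith)
            (mul_nonneg (tan_nonneg_of_nonneg_of_le_pi_div_two hb.le hb'.le) hc.le)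
      _ = tan b * cos (2 * b) * c := by ring
  calc sin s / s ≤ 1 - 50 / 27 * b ^ 2 + 250 / 243 * b ^ 4 := hsin.trans hquad
    _ < (1 - b ^ 2 / 6) * (1 - 2 * b ^ 2) / c := by rwa [lt_div_iff₀ hc]
    _ ≤ tan b * cos (2 * b) / b := by
      rw [div_le_div_iff₀ hc hb]
      linarith

theorem area_regular_even_lt_odd_general (n : ℕ) (hn : 6 ≤ n) :
    (n / 8 : ℝ) * Real.sin (2 * π / n) <
      ((n : ℝ) - 1) / 2 *
        (Real.sin (π / ((n : ℝ) - 1)) - Real.tan (π / (2 * ((n : ℝ) - 1)))) := by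
  have hn' : (6 : ℝ) ≤ n := by exact_mod_cast hn
  set m : ℝ := n - 1 with hm
  have hm5 : 5 ≤ m := by linarith
  set b := π / (2 * m) with hb
  set s := 2 * π / n with hs
  have hb0 : 0 < b := by positivity
  have hb2 : b ^ 2 ≤ 1 / 10 := by
    have : b ≤ π / 10 := by rw [hb]; gcongr; linarith
    nlinarith [pi_lt_d2]
  have hbs : 10 * b ≤ 3 * s := by
    rw [hb, hs, mul_div_assoc', mul_div_assoc', div_le_div_iff₀ (by positivity) (by positivity)]
    nlinarith [pi_pos]
  have hsb : s ≤ 4 * b := by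
    rw [hb, hs, mul_div_assoc', div_le_div_iff₀ (by positivity) (by positivity)]
    nlinarith [pi_pos]
  have hlhs : n / 8 * sin s = π / 4 * (sin s / s) := by
    rw [hs]
    field_simp
    ring
  have hrhs : m / 2 * (sin (π / m) - tan b) = π / 4 * (tan b * cos (2 * b) / b) := by
    rw [show π / m = 2 * b by rw [hb]; field_simp, sin_two_mul_sub_tan, hb]
    field_simp
    ring
  rw [hlhs, hrhs]
  exact mul_lt_mul_of_pos_left (sin_div_lt_tan_mul_cos_two_mul_div hb0 hb2 hbs hsb) (by positivity)

/-- For every even `n ≥ 6`, the area of the regular small `n`-gon is strictly less than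
the area of the regular small `(n-1)`-gon. -/
theorem area_regular_even_lt_odd (n : ℕ) (hn : 6 ≤ n) (heven : Even n) :
    (n / 8 : ℝ) * Real.sin (2 * π / n) <
      ((n : ℝ) - 1) / 2 *
        (Real.sin (π / ((n : ℝ) - 1)) - Real.tan (π / (2 * ((n : ℝ) - 1)))) :=
  area_regular_even_lt_odd_general n hn
end

section
/- For every odd integer m ≥ 5 (writing n = m+1 even), the quantity A(R_m^+) := (m/2)·(sin(π/m) − tan(π/(2m))) + sin(π/(2m)) − (1/2)·sin(π/m) is strictly greater than the area (n/8)·sin(2π/n) of the regular small n-gon, where n = m+1. -/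
/-!
Both areas are compared through Taylor polynomials of `sin` and `tan` at the small angles
`2π/(m+1)`, `π/m` and `π/(2m)`. The two quantities agree to leading order (both are
`π/4 + O(1/m²)`), and at order `1/m²` the regular `(m+1)`-gon loses `π³/(6m²)` while `R_m⁺`
only loses `5π³/(48m²)`; the fifth-order remainders are dominated by this gap once `m ≥ 5`,
using `π² ≤ 10`.
-/

open Real

noncomputable def regularArea (n : ℝ) : ℝ :=
  n / 8 * sin (2 * π / n)

noncomputable def rplusArea (m : ℝ) : ℝ :=
  m / 2 * (sin (π / m) - tan (π / (2 * m))) + sin (π / (2 * m)) - 1 / 2 * sin (π / m)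

lemma le_of_hasDerivAt_le_of_nonneg {f g f' g' : ℝ → ℝ} (hf : ∀ x, HasDerivAt f (f' x) x)
    (hg : ∀ x, HasDerivAt g (g' x) x) (h₀ : f 0 ≤ g 0) (hd : ∀ x, 0 ≤ x → f' x ≤ g' x)
    {x : ℝ} (hx : 0 ≤ x) : f x ≤ g x :=
  image_le_of_deriv_right_le_deriv_boundary (fun y _ ↦ (hf y).continuousAt.continuousWithinAt)
    (fun y _ ↦ (hf y).hasDerivWithinAt) h₀ (fun y _ ↦ (hg y).continuousAt.continuousWithinAt)
    (fun y _ ↦ (hg y).hasDerivWithinAt) (fun y hy ↦ hd y hy.1) ⟨hx, le_rfl⟩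

lemma cos_le_one_sub_sq_div_two_add_pow_four_div {x : ℝ} (hx : 0 ≤ x) :
    cos x ≤ 1 - x ^ 2 / 2 + x ^ 4 / 24 := by
  refine le_of_hasDerivAt_le_of_nonneg (g := fun x ↦ 1 - x ^ 2 / 2 + x ^ 4 / 24)
    (f' := fun x ↦ -sin x) (g' := fun x ↦ -x + x ^ 3 / 6) hasDerivAt_cos (fun x ↦ ?_)
    (by norm_num) (fun x hx ↦ ?_) hx
  · refine (((hasDerivAt_const x 1).sub ((hasDerivAt_pow 2 x).div_const 2)).add
      ((hasDerivAt_pow 4 x).div_const 24)).congr_deriv ?_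
    push_cast; ring
  · linarith [sin_ge_sub_cube hx]

lemma sin_le_sub_pow_three_div_add_pow_five_div {x : ℝ} (hx : 0 ≤ x) :
    sin x ≤ x - x ^ 3 / 6 + x ^ 5 / 120 := by
  refine le_of_hasDerivAt_le_of_nonneg (g := fun x ↦ x - x ^ 3 / 6 + x ^ 5 / 120)
    (f' := cos) (g' := fun x ↦ 1 - x ^ 2 / 2 + x ^ 4 / 24) hasDerivAt_sin (fun x ↦ ?_)
    (by norm_num) (fun x hx ↦ ?_) hx
  · refine (((hasDerivAt_id x).sub ((hasDerivAt_pow 3 x).div_const 6)).add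
      ((hasDerivAt_pow 5 x).div_const 120)).congr_deriv ?_
    push_cast; ring
  · exact cos_le_one_sub_sq_div_two_add_pow_four_div hx

/-- The coefficient `19/100` exceeds the true one, `2/15`, by enough to absorb the error of
`cos x ≥ 1 - x²/2` as long as `19 x² ≤ 3`. -/
lemma tan_le_add_pow_three_div_add_pow_five {x : ℝ} (hx : 0 ≤ x) (hx₂ : 19 * x ^ 2 ≤ 3) :
    tan x ≤ x + x ^ 3 / 3 + 19 / 100 * x ^ 5 := by
  have hcos : 0 < cos x := cos_pos_of_mem_Ioo ⟨by linarith [pi_pos], by nlinarith [pi_gt_three]⟩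
  rw [tan_eq_sin_div_cos, div_le_iff₀ hcos]
  have hcos_ge := mul_le_mul_of_nonneg_left (one_sub_sq_div_two_le_cos (x := x))
    (by positivity : 0 ≤ x + x ^ 3 / 3 + 19 / 100 * x ^ 5)
  have hrem : 0 ≤ x ^ 5 * (3 / 200 - 19 / 200 * x ^ 2) := by
    apply mul_nonneg (pow_nonneg hx 5); linarith
  nlinarith [sin_le_sub_pow_three_div_add_pow_five_div hx, hcos_ge, hrem]

lemma regularArea_le {n : ℝ} (hn : 0 < n) :
    regularArea n ≤ π / 4 - π ^ 3 / (6 * n ^ 2) + π ^ 5 / (30 * n ^ 4) := by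
  calc regularArea n
      ≤ n / 8 * (2 * π / n - (2 * π / n) ^ 3 / 6 + (2 * π / n) ^ 5 / 120) :=
        mul_le_mul_of_nonneg_left (sin_le_sub_pow_three_div_add_pow_five_div (by positivity))
          (by positivity)
    _ = π / 4 - π ^ 3 / (6 * n ^ 2) + π ^ 5 / (30 * n ^ 4) := by field_simp; ring

lemma le_rplusArea {m : ℝ} (hm : 5 ≤ m) :
    π / 4 - 5 * π ^ 3 / (48 * m ^ 2) - 19 / 6400 * π ^ 5 / m ^ 4
      + (π ^ 3 / (16 * m ^ 3) - π ^ 5 / (240 * m ^ 5)) ≤ rplusArea m := by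
  have hm₀ : 0 < m := by linarith
  set x := π / m with hx
  set h := π / (2 * m) with hh
  have hx₀ : 0 ≤ x := by positivity
  have hh₀ : 0 ≤ h := by positivity
  have hh₂ : 19 * h ^ 2 ≤ 3 := by
    have : h ≤ 0.315 := by rw [hh, div_le_iff₀ (by positivity)]; linarith [pi_lt_d2]
    nlinarith
  have hmain : m / 2 * ((x - x ^ 3 / 6) - (h + h ^ 3 / 3 + 19 / 100 * h ^ 5))
      ≤ m / 2 * (sin x - tan h) :=
    mul_le_mul_of_nonneg_left (by linarith [sin_ge_sub_cube hx₀,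
      tan_le_add_pow_three_div_add_pow_five hh₀ hh₂]) (by positivity)
  have e₁ : m / 2 * ((x - x ^ 3 / 6) - (h + h ^ 3 / 3 + 19 / 100 * h ^ 5))
      = π / 4 - 5 * π ^ 3 / (48 * m ^ 2) - 19 / 6400 * π ^ 5 / m ^ 4 := by
    rw [hx, hh]; field_simp; ring
  have e₂ : (h - h ^ 3 / 6) - 1 / 2 * (x - x ^ 3 / 6 + x ^ 5 / 120)
      = π ^ 3 / (16 * m ^ 3) - π ^ 5 / (240 * m ^ 5) := by
    rw [hx, hh]; field_simp; ring
  unfold rplusArea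
  linarith [sin_ge_sub_cube hh₀, sin_le_sub_pow_three_div_add_pow_five_div hx₀,
    hmain, e₁, e₂]

/-- `10` stands for an upper bound of `π²`. -/
lemma ten_mul_quintic_lt_cubic {m : ℝ} (hm : 5 ≤ m) :
    10 * ((m + 1) ^ 4 / 240 + 19 / 6400 * m * (m + 1) ^ 4 + m ^ 5 / 30)
      < m ^ 5 * (m + 1) ^ 2 / 6 + m ^ 2 * (m + 1) ^ 4 / 16 - 5 * m ^ 3 * (m + 1) ^ 4 / 48 := by
  have hs : 0 ≤ m - 5 := by linarith
  nlinarith [pow_nonneg hs 7, pow_nonneg hs 6, pow_nonneg hs 5, pow_nonneg hs 4,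
    pow_nonneg hs 3, pow_nonneg hs 2]

lemma regular_upper_lt_rplus_lower {m : ℝ} (hm : 5 ≤ m) :
    π / 4 - π ^ 3 / (6 * (m + 1) ^ 2) + π ^ 5 / (30 * (m + 1) ^ 4)
      < π / 4 - 5 * π ^ 3 / (48 * m ^ 2) - 19 / 6400 * π ^ 5 / m ^ 4
        + (π ^ 3 / (16 * m ^ 3) - π ^ 5 / (240 * m ^ 5)) := by
  have hm₀ : 0 < m := by linarith
  have hπ₂ : π ^ 2 ≤ 10 := by nlinarith [pi_lt_d2, pi_pos]
  have hnum : 0 < π ^ 3 * (m ^ 5 * (m + 1) ^ 2 / 6 + m ^ 2 * (m + 1) ^ 4 / 16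
      - 5 * m ^ 3 * (m + 1) ^ 4 / 48)
      - π ^ 5 * ((m + 1) ^ 4 / 240 + 19 / 6400 * m * (m + 1) ^ 4 + m ^ 5 / 30) := by
    have hquintic : π ^ 5 * ((m + 1) ^ 4 / 240 + 19 / 6400 * m * (m + 1) ^ 4 + m ^ 5 / 30)
        ≤ π ^ 3 * (10 * ((m + 1) ^ 4 / 240 + 19 / 6400 * m * (m + 1) ^ 4 + m ^ 5 / 30)) := by
      rw [show π ^ 5 = π ^ 3 * π ^ 2 by ring, mul_assoc]
      gcongr
    nlinarith [mul_lt_mul_of_pos_left (ten_mul_quintic_lt_cubic hm) (pow_pos pi_pos 3)]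
  refine sub_pos.1 ((div_pos hnum (by positivity : 0 < m ^ 5 * (m + 1) ^ 4)).trans_eq ?_)
  field_simp
  ring

lemma regularArea_lt_rplusArea {m : ℝ} (hm : 5 ≤ m) : regularArea (m + 1) < rplusArea m :=
  calc regularArea (m + 1) ≤ _ := regularArea_le (by linarith)
    _ < _ := regular_upper_lt_rplus_lower hm
    _ ≤ rplusArea m := le_rplusArea hm

theorem area_Rplus_gt_regular_general (m : ℕ) (hm : 5 ≤ m) :
    ((m : ℝ) + 1) / 8 * Real.sin (2 * π / ((m : ℝ) + 1)) <
      (m / 2 : ℝ) * (Real.sin (π / m) - Real.tan (π / (2 * m)))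
        + Real.sin (π / (2 * m)) - (1 / 2) * Real.sin (π / m) :=
  regularArea_lt_rplusArea (by exact_mod_cast hm)

/-- For every odd `m ≥ 5`, the area of `R_m⁺` (the regular small `m`-gon augmented with one
vertex at distance 1 along the mediatrix of an angle) is strictly greater than the area of the
regular small `(m+1)`-gon. -/
theorem area_Rplus_gt_regular (m : ℕ) (hm : 5 ≤ m) (hodd : Odd m) :
    ((m : ℝ) + 1) / 8 * Real.sin (2 * π / ((m : ℝ) + 1)) <
      (m / 2 : ℝ) * (Real.sin (π / m) - Real.tan (π / (2 * m)))
        + Real.sin (π / (2 * m)) - (1 / 2) * Real.sin (π / m) :=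
  area_Rplus_gt_regular_general m hm
end

section
/- Let g_i, h_i (i = 0,…,m) be convex differentiable functions on ℝ^d, and let c satisfy g_i(c) − h_i(c) ≥ 0 for all i = 1,…,m. Then c is feasible for the linearized problem (i.e., ḡ_i(c;c) − h_i(c) ≥ 0 for all i, where ḡ_i(z;c) = g_i(c) + ∇g_i(c)ᵀ(z−c)). Moreover, if z* maximizes ḡ_0(z;c) − h_0(z) over the linearized feasible set {z : ḡ_i(z;c) − h_i(z) ≥ 0 ∀i}, then g_0(c) − h_0(c) ≤ g_0(z*) − h_0(z*). -/
/-!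
A convex differentiable function lies above its tangent plane, so the linearized objective at
`c` agrees with the true one at `c` and underestimates it everywhere. Hence
`g₀ c - h₀ c = ḡ₀(c; c) - h₀ c ≤ ḡ₀(z*; c) - h₀ z* ≤ g₀ z* - h₀ z*`,
the middle step because `c` is feasible for the linearized problem.
-/

open Real
open scoped RealInnerProductSpace

theorem ConvexOn.add_fderiv_sub_le {E : Type*} [NormedAddCommGroup E] [NormedSpace ℝ E]
    {s : Set E} {f : E → ℝ} {f' : E →L[ℝ] ℝ} {c z : E} (hf : ConvexOn ℝ s f)
    (hc : c ∈ s) (hz : z ∈ s) (hf' : HasFDerivAt f f' c) :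
    f c + f' (z - c) ≤ f z := by
  let L : ℝ →ᵃ[ℝ] E := AffineMap.lineMap c z
  have hL0 : L 0 = c := AffineMap.lineMap_apply_zero c z
  have hL1 : L 1 = z := AffineMap.lineMap_apply_one c z
  have hline : ConvexOn ℝ (L ⁻¹' s) (f ∘ L) := hf.comp_affineMap L
  have hderiv : HasDerivAt (f ∘ L) (f' (z - c)) 0 := by
    rw [← hL0] at hf'
    exact hf'.comp_hasDerivAt 0 AffineMap.hasDerivAt_lineMap
  have hslope := hline.le_slope_of_hasDerivAt (by simpa [hL0]) (by simpa [hL1]) zero_lt_one hderiv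
  simp only [slope_def_field, Function.comp_apply, hL0, hL1, sub_zero, div_one] at hslope
  linarith

theorem ConvexOn.add_inner_gradient_sub_le {E : Type*} [NormedAddCommGroup E]
    [InnerProductSpace ℝ E] [CompleteSpace E] {s : Set E} {f : E → ℝ} {c z : E}
    (hf : ConvexOn ℝ s f) (hc : c ∈ s) (hz : z ∈ s) (hfc : DifferentiableAt ℝ f c) :
    f c + ⟪gradient f c, z - c⟫ ≤ f z :=
  hf.add_fderiv_sub_le hc hz hfc.hasGradientAt.hasFDerivAt

theorem ccp_ascent_general (d m : ℕ) (g h : ℕ → EuclideanSpace ℝ (Fin d) → ℝ)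
    (hg : ∀ i ≤ m, ConvexOn ℝ Set.univ (g i)) (hgd : ∀ i ≤ m, Differentiable ℝ (g i))
    (c : EuclideanSpace ℝ (Fin d))
    (hc : ∀ i, 1 ≤ i → i ≤ m → 0 ≤ g i c - h i c) :
    (∀ i, 1 ≤ i → i ≤ m →
        0 ≤ (g i c + ⟪gradient (g i) c, c - c⟫) - h i c) ∧
    (∀ zstar : EuclideanSpace ℝ (Fin d),
      (∀ i, 1 ≤ i → i ≤ m →
          0 ≤ (g i c + ⟪gradient (g i) c, zstar - c⟫) - h i zstar) →
      (∀ z, (∀ i, 1 ≤ i → i ≤ m →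
            0 ≤ (g i c + ⟪gradient (g i) c, z - c⟫) - h i z) →
          (g 0 c + ⟪gradient (g 0) c, z - c⟫) - h 0 z ≤
            (g 0 c + ⟪gradient (g 0) c, zstar - c⟫) - h 0 zstar) →
      g 0 c - h 0 c ≤ g 0 zstar - h 0 zstar) := by
  have hc_feasible : ∀ i, 1 ≤ i → i ≤ m →
      0 ≤ (g i c + ⟪gradient (g i) c, c - c⟫) - h i c := by
    intro i hi him
    simpa using hc i hi him
  refine ⟨hc_feasible, fun zstar _ hmax => ?_⟩
  have hc_le_zstar := hmax c hc_feasible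
  rw [sub_self, inner_zero_right, add_zero] at hc_le_zstar
  have htangent : g 0 c + ⟪gradient (g 0) c, zstar - c⟫ ≤ g 0 zstar :=
    (hg 0 m.zero_le).add_inner_gradient_sub_le (Set.mem_univ c) (Set.mem_univ zstar)
      (hgd 0 m.zero_le c)
  linarith

/-- Ascent property of the concave-convex procedure: if `c` is feasible for the
difference-of-convex problem `max g₀ - h₀ s.t. gᵢ - hᵢ ≥ 0 (i = 1,…,m)`, then `c` is feasible
for the convex restriction linearized at `c`, and any maximizer `z*` of the linearized problem
satisfies `g₀ c - h₀ c ≤ g₀ z* - h₀ z*`. -/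
theorem ccp_ascent (d m : ℕ) (g h : ℕ → EuclideanSpace ℝ (Fin d) → ℝ)
    (hg : ∀ i ≤ m, ConvexOn ℝ Set.univ (g i)) (hgd : ∀ i ≤ m, Differentiable ℝ (g i))
    (hh : ∀ i ≤ m, ConvexOn ℝ Set.univ (h i)) (hhd : ∀ i ≤ m, Differentiable ℝ (h i))
    (c : EuclideanSpace ℝ (Fin d))
    (hc : ∀ i, 1 ≤ i → i ≤ m → 0 ≤ g i c - h i c) :
    (∀ i, 1 ≤ i → i ≤ m →
        0 ≤ (g i c + ⟪gradient (g i) c, c - c⟫) - h i c) ∧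
    (∀ zstar : EuclideanSpace ℝ (Fin d),
      (∀ i, 1 ≤ i → i ≤ m →
          0 ≤ (g i c + ⟪gradient (g i) c, zstar - c⟫) - h i zstar) →
      (∀ z, (∀ i, 1 ≤ i → i ≤ m →
            0 ≤ (g i c + ⟪gradient (g i) c, z - c⟫) - h i z) →
          (g 0 c + ⟪gradient (g 0) c, z - c⟫) - h 0 z ≤
            (g 0 c + ⟪gradient (g 0) c, zstar - c⟫) - h 0 zstar) →
      g 0 c - h 0 c ≤ g 0 zstar - h 0 zstar) :=
  ccp_ascent_general d m g h hg hgd c hc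
end

section
/- For n ≥ 3, the sequence Ā_n := (n/2)·(sin(π/n) − tan(π/(2n))) is strictly increasing in n and converges to π/4 as n → ∞. -/
/-!
With `x = π / (2n)` one has `Ā_n = (π / 4) · (sin x / x) · (2 cos x - sec x)`. For `n ≥ 2` the
point `x` lies in `(0, π / 4]`, where `sin x / x` is positive and strictly decreasing (`sin` is
strictly concave) and `2 cos x - sec x = cos 2x / cos x` is nonnegative and strictly decreasing.
Hence `Ā_n` increases with `n`, and as `x → 0` it tends to `π / 4` by continuity.
-/

open Real Filter Topology Set

lemma strictAntiOn_sin_div_self : StrictAntiOn (fun x => sin x / x) (Ioc 0 π) := by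
  intro x hx y hy hxy
  simpa using strictConcaveOn_sin_Icc.secant_strict_mono (a := 0) ⟨le_rfl, pi_pos.le⟩
    (Ioc_subset_Icc_self hx) (Ioc_subset_Icc_self hy) hx.1.ne' hy.1.ne' hxy

lemma sinc_pos {x : ℝ} (hx : x ∈ Ioo 0 π) : 0 < sinc x := by
  rw [sinc_of_ne_zero hx.1.ne']
  exact div_pos (sin_pos_of_pos_of_lt_pi hx.1 hx.2) hx.1

lemma strictAntiOn_two_mul_cos_sub_inv_cos :
    StrictAntiOn (fun x => 2 * cos x - (cos x)⁻¹) (Ico 0 (π / 2)) := by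
  intro x hx y hy hxy
  have hcy : 0 < cos y := cos_pos_of_mem_Ioo ⟨by linarith [pi_pos, hy.1], hy.2⟩
  have hcos : cos y < cos x :=
    strictAntiOn_cos ⟨hx.1, by linarith [hx.2, pi_pos]⟩ ⟨hy.1, by linarith [hy.2, pi_pos]⟩ hxy
  have : (cos x)⁻¹ < (cos y)⁻¹ := by gcongr
  simp only
  linarith

lemma two_mul_cos_sub_inv_cos_nonneg {x : ℝ} (hx : x ∈ Icc 0 (π / 4)) :
    0 ≤ 2 * cos x - (cos x)⁻¹ := by
  have hc : 0 < cos x :=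
    cos_pos_of_mem_Ioo ⟨by linarith [pi_pos, hx.1], by linarith [pi_pos, hx.2]⟩
  have h2 : 0 ≤ cos (2 * x) :=
    cos_nonneg_of_mem_Icc ⟨by linarith [pi_pos, hx.1], by linarith [hx.2]⟩
  have : 2 * cos x - (cos x)⁻¹ = cos (2 * x) / cos x := by
    rw [cos_two_mul]; field_simp
  rw [this]
  positivity

noncomputable def reinhardtProfile (x : ℝ) : ℝ := sinc x * (2 * cos x - (cos x)⁻¹)

lemma half_mul_sin_sub_tan_eq {t : ℝ} (ht : t ≠ 0) :
    t / 2 * (sin (π / t) - tan (π / (2 * t))) = π / 4 * reinhardtProfile (π / (2 * t)) := by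
  have hx : π / (2 * t) ≠ 0 := by positivity
  have h2 : π / t = 2 * (π / (2 * t)) := by field_simp
  rw [reinhardtProfile, sinc_of_ne_zero hx, tan_eq_sin_div_cos, h2, sin_two_mul]
  field_simp
  ring

lemma strictAntiOn_reinhardtProfile : StrictAntiOn reinhardtProfile (Ioc 0 (π / 4)) := by
  intro x hx y hy hxy
  have hx' : x ∈ Ioc 0 π := ⟨hx.1, by linarith [hx.2, pi_pos]⟩
  have hy' : y ∈ Ioc 0 π := ⟨hy.1, by linarith [hy.2, pi_pos]⟩
  have hsinc : sinc y < sinc x := by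
    rw [sinc_of_ne_zero hx.1.ne', sinc_of_ne_zero hy.1.ne']
    exact strictAntiOn_sin_div_self hx' hy' hxy
  have hsinc_pos : 0 < sinc x := sinc_pos ⟨hx.1, by linarith [hx.2, pi_pos]⟩
  have hg : 2 * cos y - (cos y)⁻¹ < 2 * cos x - (cos x)⁻¹ :=
    strictAntiOn_two_mul_cos_sub_inv_cos ⟨hx.1.le, by linarith [hx.2, pi_pos]⟩
      ⟨hy.1.le, by linarith [hy.2, pi_pos]⟩ hxy
  have hg_nonneg := two_mul_cos_sub_inv_cos_nonneg ⟨hy.1.le, hy.2⟩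
  calc reinhardtProfile y ≤ sinc x * (2 * cos y - (cos y)⁻¹) :=
        mul_le_mul_of_nonneg_right hsinc.le hg_nonneg
    _ < reinhardtProfile x := mul_lt_mul_of_pos_left hg hsinc_pos

lemma continuousAt_reinhardtProfile_zero : ContinuousAt reinhardtProfile 0 := by
  unfold reinhardtProfile
  have : cos 0 ≠ 0 := by simp
  fun_prop (disch := exact this)

lemma reinhardtProfile_zero : reinhardtProfile 0 = 1 := by
  norm_num [reinhardtProfile, sinc_zero]

lemma pi_div_two_mul_mem_Ioc {n : ℕ} (hn : 2 ≤ n) : π / (2 * n) ∈ Ioc 0 (π / 4) := by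
  have : (2 : ℝ) ≤ n := by exact_mod_cast hn
  refine ⟨by positivity, ?_⟩
  rw [div_le_div_iff_of_pos_left pi_pos (by positivity) (by norm_num)]
  linarith

/-- Reinhardt's upper bound `Ā_n = (n/2)(sin(π/n) - tan(π/(2n)))` is strictly increasing for
`n ≥ 3` and converges to `π/4`, the area of the disk of unit diameter. -/
theorem reinhardt_bound_mono_tendsto :
    (∀ m n : ℕ, 3 ≤ m → m < n →
        (m / 2 : ℝ) * (Real.sin (π / m) - Real.tan (π / (2 * m))) <
        (n / 2 : ℝ) * (Real.sin (π / n) - Real.tan (π / (2 * n)))) ∧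
    Tendsto (fun n : ℕ => (n / 2 : ℝ) * (Real.sin (π / n) - Real.tan (π / (2 * n))))
      atTop (nhds (π / 4)) := by
  refine ⟨fun m n hm hmn => ?_, ?_⟩
  · have hmn' : (m : ℝ) < n := by exact_mod_cast hmn
    rw [half_mul_sin_sub_tan_eq (Nat.cast_ne_zero.mpr (by omega)),
      half_mul_sin_sub_tan_eq (Nat.cast_ne_zero.mpr (by omega))]
    gcongr
    refine strictAntiOn_reinhardtProfile (pi_div_two_mul_mem_Ioc (by omega))
      (pi_div_two_mul_mem_Ioc (by omega)) ?_
    gcongr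
  · have hx : Tendsto (fun n : ℕ => π / (2 * n)) atTop (𝓝 0) :=
      tendsto_const_nhds.div_atTop (tendsto_natCast_atTop_atTop.const_mul_atTop two_pos)
    have h := (continuousAt_reinhardtProfile_zero.tendsto.comp hx).const_mul (π / 4)
    rw [reinhardtProfile_zero, mul_one] at h
    refine h.congr' ?_
    filter_upwards [eventually_ne_atTop 0] with n hn
    exact (half_mul_sin_sub_tan_eq (by exact_mod_cast hn)).symm
end
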